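/- Let n ≥ 1 be an integer and q > 0. For 0 < p < q define D(p) := −∫_0^∞ (z^{n−1}/(n−1)!) Φ(q, z) ln Ψ(p, q, z) dz, where Ψ(p, q, z) := 1 + (p/(q−p))(1 − Φ(p, z)/Φ(q, z)) and Φ(x, z) := ∫_0^∞ e^{−v} (1 + x v)^{−n} e^{−z/(1+xv)} dv. Then lim_{p→0⁺} D(p)/p² = ζ(q, n)/(2q²), where ζ(q, n) := −1 + ∫_0^∞ (z^{n−1}/(n−1)!) e^{−2z}/Φ(q, z) dz. -/

import Mathlib

open MeasureTheory Real Set Filter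

/-- `Phi n x z = ∫_0^∞ e^{−v} (1 + x v)^{−n} e^{−z/(1+xv)} dv`. -/
noncomputable def Phi (n : ℕ) (x z : ℝ) : ℝ :=
  ∫ v in Set.Ioi (0 : ℝ),
    Real.exp (-v) * (1 + x * v) ^ (-(n : ℤ)) * Real.exp (-z / (1 + x * v))

/-!
Write `T_p = Ψ(p, q, ·) - 1` and `w = z^{n-1}/(n-1)! · Φ(q, ·)`. For every `x ≥ 0`,
`z^{n-1}/(n-1)! · Φ(x, z)` is a probability density on `(0, ∞)` (Fubini and the Gamma integral), so
`∫ w T_p = 0` and `D(p) = -∫ w (log (1 + T_p) - T_p)`. At the scale `z = s²`, a window of the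
`v`-integral near `v = s` gives `Φ(q, s²) ≥ c e^{-β s}`, while splitting it at `v = β s` gives
`Φ(p, s²) ≤ C e^{-β s}` once `p β² ≤ 1/2`; hence `Φ(p, ·) ≤ M Φ(q, ·)` and `|T_p| ≤ K p` uniformly
for small `p`. Since `log (1 + t) - t = -t²/2 + O(t³)` and `T_p / p → τ = (1 - e^{-z}/Φ(q, z))/q`,
dominated convergence gives `D(p)/p² → ½ ∫ w τ²`, and expanding the square yields `ζ/q²`.
-/

open Topology
open scoped Nat

lemma abs_log_one_add_sub_add_sq_le {t : ℝ} (ht : |t| ≤ 1 / 2) :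
    |log (1 + t) - t + t ^ 2 / 2| ≤ 2 * |t| ^ 3 := by
  have h := abs_log_sub_add_sum_range_le (x := -t) (by rw [abs_neg]; linarith) 2
  norm_num [Finset.sum_range_succ] at h
  have h3 : |t| ^ 3 / (1 - |t|) ≤ 2 * |t| ^ 3 := by
    rw [div_le_iff₀ (by linarith)]
    nlinarith [pow_nonneg (abs_nonneg t) 3]
  calc |log (1 + t) - t + t ^ 2 / 2| = |-t + t ^ 2 / 2 + log (1 + t)| := by ring_nf
    _ ≤ 2 * |t| ^ 3 := h.trans h3

lemma abs_log_one_add_sub_le {t : ℝ} (ht : |t| ≤ 1 / 2) : |log (1 + t) - t| ≤ 2 * t ^ 2 := by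
  have hcube : 2 * |t| ^ 3 ≤ t ^ 2 := by
    rw [← sq_abs t]; nlinarith [abs_nonneg t, sq_nonneg |t|]
  calc |log (1 + t) - t| = |(log (1 + t) - t + t ^ 2 / 2) - t ^ 2 / 2| := by ring_nf
    _ ≤ |log (1 + t) - t + t ^ 2 / 2| + |t ^ 2 / 2| := abs_sub _ _
    _ ≤ 2 * t ^ 2 := by
      rw [abs_of_nonneg (by positivity : 0 ≤ t ^ 2 / 2)]
      linarith [abs_log_one_add_sub_add_sq_le ht, sq_nonneg t]

section QuadraticLimit

variable {l : Filter ℝ}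

lemma eventually_mul_abs_le_half (hl : l ≤ 𝓝[≠] 0) (K : ℝ) : ∀ᶠ p in l, K * |p| ≤ 1 / 2 := by
  have : Tendsto (fun p : ℝ => K * |p|) l (𝓝 0) := by
    simpa using (tendsto_id.mono_left (hl.trans nhdsWithin_le_nhds)).abs.const_mul K
  exact this.eventually (ge_mem_nhds (by norm_num))

lemma abs_log_one_add_sub_le_of_abs_div_le {t p K : ℝ} (hp : p ≠ 0) (ht : |t / p| ≤ K)
    (hKp : K * |p| ≤ 1 / 2) : |log (1 + t) - t| ≤ 2 * K ^ 2 * p ^ 2 := by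
  have htp : |t| ≤ K * |p| := by rwa [abs_div, div_le_iff₀ (abs_pos.2 hp)] at ht
  calc |log (1 + t) - t| ≤ 2 * |t| ^ 2 := by
        rw [sq_abs]; exact abs_log_one_add_sub_le (htp.trans hKp)
    _ ≤ 2 * (K * |p|) ^ 2 := by gcongr
    _ = 2 * K ^ 2 * p ^ 2 := by rw [mul_pow, sq_abs]; ring

lemma tendsto_log_one_add_sub_div_sq (hl : l ≤ 𝓝[≠] 0) {t : ℝ → ℝ} {τ : ℝ}
    (hτ : Tendsto (fun p => t p / p) l (𝓝 τ)) :
    Tendsto (fun p => (log (1 + t p) - t p) / p ^ 2) l (𝓝 (-(τ ^ 2 / 2))) := by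
  set C := |τ| + 1
  have hC : ∀ᶠ p in l, |t p / p| ≤ C :=
    (hτ.abs.eventually (gt_mem_nhds (lt_add_one |τ|))).mono fun _ h => h.le
  have hcubic : Tendsto (fun p => (log (1 + t p) - t p + t p ^ 2 / 2) / p ^ 2) l (𝓝 0) := by
    refine squeeze_zero_norm' ?_ (by simpa using (tendsto_id.mono_left
      (hl.trans nhdsWithin_le_nhds)).abs.const_mul (2 * C ^ 3))
    filter_upwards [hC, eventually_mul_abs_le_half hl C, hl self_mem_nhdsWithin] with p hpC hps hp
    have htp : |t p| ≤ C * |p| := by rwa [abs_div, div_le_iff₀ (abs_pos.2 hp)] at hpC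
    rw [norm_div, norm_pow, Real.norm_eq_abs, Real.norm_eq_abs,
      div_le_iff₀ (pow_pos (abs_pos.2 hp) 2)]
    calc |log (1 + t p) - t p + t p ^ 2 / 2| ≤ 2 * |t p| ^ 3 :=
          abs_log_one_add_sub_add_sq_le (htp.trans hps)
      _ ≤ 2 * (C * |p|) ^ 3 := by gcongr
      _ = 2 * C ^ 3 * |p| * |p| ^ 2 := by ring
  have hquad : Tendsto (fun p => (t p / p) ^ 2 / 2) l (𝓝 (τ ^ 2 / 2)) := (hτ.pow 2).div_const 2
  convert hcubic.sub hquad using 2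
  · ring
  · rw [zero_sub]

variable {α : Type*} [MeasurableSpace α] {μ : Measure α} [l.IsCountablyGenerated] {w : α → ℝ}
  {T : ℝ → α → ℝ} {τ : α → ℝ} {K : ℝ}

lemma aestronglyMeasurable_mul_log_one_add_sub (hw : Integrable w μ) {t : α → ℝ}
    (ht : AEStronglyMeasurable t μ) :
    AEStronglyMeasurable (fun a => w a * (log (1 + t a) - t a)) μ :=
  hw.aestronglyMeasurable.mul ((measurable_log.comp_aemeasurable
    (aemeasurable_const.add ht.aemeasurable)).sub ht.aemeasurable).aestronglyMeasurable

lemma tendsto_integral_mul_log_one_add_sub_div_sq (hl : l ≤ 𝓝[≠] 0) (hw : Integrable w μ)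
    (hT_meas : ∀ᶠ p in l, AEStronglyMeasurable (T p) μ)
    (hT_bound : ∀ᶠ p in l, ∀ᵐ a ∂μ, |T p a / p| ≤ K)
    (hT_lim : ∀ᵐ a ∂μ, Tendsto (fun p => T p a / p) l (𝓝 (τ a))) :
    Tendsto (fun p => ∫ a, w a * (log (1 + T p a) - T p a) / p ^ 2 ∂μ) l
      (𝓝 (-(∫ a, w a * τ a ^ 2 ∂μ) / 2)) := by
  rw [← integral_neg, ← integral_div]
  refine tendsto_integral_filter_of_dominated_convergence (fun a => ‖w a‖ * (2 * K ^ 2))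
    (hT_meas.mono fun p h => (aestronglyMeasurable_mul_log_one_add_sub hw h).mul_const _) ?_
    (hw.norm.mul_const _) ?_
  · filter_upwards [hT_bound, eventually_mul_abs_le_half hl K, hl self_mem_nhdsWithin]
      with p hpK hps hp
    filter_upwards [hpK] with a ha
    rw [norm_div, norm_mul, norm_pow, Real.norm_eq_abs (log _ - _), Real.norm_eq_abs p, sq_abs,
      mul_div_assoc]
    gcongr
    rw [div_le_iff₀ (pow_two_pos_of_ne_zero hp)]
    exact abs_log_one_add_sub_le_of_abs_div_le hp ha hps
  · filter_upwards [hT_lim] with a ha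
    convert (tendsto_log_one_add_sub_div_sq hl ha).const_mul (w a) using 2 <;> ring

theorem tendsto_integral_mul_log_one_add_div_sq (hl : l ≤ 𝓝[≠] 0) (hw : Integrable w μ)
    (hT_meas : ∀ᶠ p in l, AEStronglyMeasurable (T p) μ)
    (hT_bound : ∀ᶠ p in l, ∀ᵐ a ∂μ, |T p a / p| ≤ K)
    (hT_lim : ∀ᵐ a ∂μ, Tendsto (fun p => T p a / p) l (𝓝 (τ a)))
    (hT_mean : ∀ᶠ p in l, ∫ a, w a * T p a ∂μ = 0) :
    Tendsto (fun p => (∫ a, w a * log (1 + T p a) ∂μ) / p ^ 2) l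
      (𝓝 (-(∫ a, w a * τ a ^ 2 ∂μ) / 2)) := by
  refine (tendsto_integral_mul_log_one_add_sub_div_sq hl hw hT_meas hT_bound hT_lim).congr' ?_
  filter_upwards [hT_meas, hT_bound, eventually_mul_abs_le_half hl K, hl self_mem_nhdsWithin,
    hT_mean] with p hTm hpK hps hp hmean
  have hwT : Integrable (fun a => w a * T p a) μ := by
    refine (hw.norm.mul_const (K * |p|)).mono' (hw.aestronglyMeasurable.mul hTm) ?_
    filter_upwards [hpK] with a ha
    rw [norm_mul, Real.norm_eq_abs (T p a)]
    gcongr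
    rwa [abs_div, div_le_iff₀ (abs_pos.2 hp)] at ha
  have hwL : Integrable (fun a => w a * (log (1 + T p a) - T p a)) μ := by
    refine (hw.norm.mul_const (2 * K ^ 2 * p ^ 2)).mono'
      (aestronglyMeasurable_mul_log_one_add_sub hw hTm) ?_
    filter_upwards [hpK] with a ha
    rw [norm_mul, Real.norm_eq_abs (log _ - _)]
    exact mul_le_mul_of_nonneg_left (abs_log_one_add_sub_le_of_abs_div_le hp ha hps)
      (norm_nonneg _)
  rw [integral_div, ← add_zero (∫ a, w a * (log (1 + T p a) - T p a) ∂μ), ← hmean,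
    ← integral_add hwL hwT]
  simp only [← mul_add, sub_add_cancel]

end QuadraticLimit

noncomputable def phiKernel (n : ℕ) (x z v : ℝ) : ℝ :=
  exp (-v) * ((1 + x * v) ^ n)⁻¹ * exp (-z / (1 + x * v))

lemma Phi_eq_integral_phiKernel (n : ℕ) (x z : ℝ) :
    Phi n x z = ∫ v in Ioi 0, phiKernel n x z v := by
  simp only [Phi, phiKernel, zpow_neg, zpow_natCast]

section Kernel

variable {n : ℕ} {x z v : ℝ}

lemma phiKernel_nonneg (hx : 0 ≤ x) (hv : 0 ≤ v) : 0 ≤ phiKernel n x z v := by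
  have : 0 < 1 + x * v := by positivity
  unfold phiKernel
  positivity

lemma phiKernel_le_exp_neg (hx : 0 ≤ x) (hz : 0 ≤ z) (hv : 0 ≤ v) :
    phiKernel n x z v ≤ exp (-v) := by
  have h1 : 1 ≤ 1 + x * v := le_add_of_nonneg_right (mul_nonneg hx hv)
  have hpow : ((1 + x * v) ^ n)⁻¹ ≤ 1 := inv_le_one_of_one_le₀ (one_le_pow₀ h1)
  have hexp : exp (-z / (1 + x * v)) ≤ 1 :=
    exp_le_one_iff.2 (div_nonpos_of_nonpos_of_nonneg (by linarith) (by linarith))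
  calc phiKernel n x z v ≤ exp (-v) * 1 * 1 := by unfold phiKernel; gcongr
    _ = exp (-v) := by ring

lemma phiKernel_antitone (hx : 0 ≤ x) (hv : 0 ≤ v) : Antitone (phiKernel n x · v) := by
  intro z z' h
  have : 0 < 1 + x * v := by positivity
  have hexp : exp (-z' / (1 + x * v)) ≤ exp (-z / (1 + x * v)) :=
    exp_le_exp.2 (div_le_div_of_nonneg_right (neg_le_neg h) this.le)
  unfold phiKernel
  exact mul_le_mul_of_nonneg_left hexp (by positivity)

lemma le_phiKernel (hx : 0 ≤ x) (hz : 0 ≤ z) {a : ℝ} (ha : 0 ≤ a) (hv : v ∈ Ioc a (a + 1)) :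
    exp (-(a + 1)) * ((1 + x * (a + 1)) ^ n)⁻¹ * exp (-z / (1 + x * a)) ≤ phiKernel n x z v := by
  obtain ⟨hav, hva⟩ := hv
  have hv : 0 ≤ v := ha.trans hav.le
  have h0 : 0 < 1 + x * a := by positivity
  have hexp : exp (-z / (1 + x * a)) ≤ exp (-z / (1 + x * v)) := by
    rw [exp_le_exp, neg_div, neg_div, neg_le_neg_iff]
    exact div_le_div_of_nonneg_left hz h0 (by gcongr)
  unfold phiKernel
  gcongr

lemma phiKernel_le_of_le (hx : 0 ≤ x) (hz : 0 ≤ z) (hv : 0 ≤ v) {a : ℝ} (hva : v ≤ a) :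
    phiKernel n x z v ≤ exp (-(z / (1 + x * a))) * exp (-v) := by
  have h0 : 0 < 1 + x * v := by positivity
  have hpow : ((1 + x * v) ^ n)⁻¹ ≤ 1 :=
    inv_le_one_of_one_le₀ (one_le_pow₀ (le_add_of_nonneg_right (by positivity)))
  have hexp : exp (-z / (1 + x * v)) ≤ exp (-(z / (1 + x * a))) := by
    rw [exp_le_exp, neg_div, neg_le_neg_iff]
    exact div_le_div_of_nonneg_left hz h0 (by gcongr)
  calc phiKernel n x z v ≤ exp (-v) * 1 * exp (-(z / (1 + x * a))) := by
        unfold phiKernel; gcongr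
    _ = exp (-(z / (1 + x * a))) * exp (-v) := by ring

lemma continuousOn_phiKernel (hx : 0 ≤ x) :
    ContinuousOn (fun zv : ℝ × ℝ => phiKernel n x zv.1 zv.2) (univ ×ˢ Ici 0) := by
  have hpos : ∀ zv ∈ (univ ×ˢ Ici 0 : Set (ℝ × ℝ)), 1 + x * zv.2 ≠ 0 :=
    fun zv hzv => (by have : (0:ℝ) ≤ zv.2 := hzv.2; positivity)
  have hden : ContinuousOn (fun zv : ℝ × ℝ => 1 + x * zv.2) (univ ×ˢ Ici 0) := by fun_prop
  unfold phiKernel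
  refine ContinuousOn.mul (ContinuousOn.mul (by fun_prop) ?_) ?_
  · exact (hden.pow n).inv₀ fun zv hzv => pow_ne_zero n (hpos zv hzv)
  · exact continuous_exp.comp_continuousOn (continuous_fst.neg.continuousOn.div hden hpos)

lemma continuousAt_phiKernel_zero : ContinuousAt (fun x => phiKernel n x z v) 0 := by
  unfold phiKernel
  fun_prop (disch := simp)

lemma integrableOn_phiKernel (hx : 0 ≤ x) (hz : 0 ≤ z) :
    IntegrableOn (phiKernel n x z) (Ioi 0) := by
  refine Integrable.mono' (integrableOn_exp_neg_Ioi 0) ?_ ?_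
  · refine ContinuousOn.aestronglyMeasurable ?_ measurableSet_Ioi
    exact (continuousOn_phiKernel hx).comp (Continuous.prodMk_right z).continuousOn
      fun v hv => ⟨mem_univ z, mem_Ici.2 (le_of_lt hv)⟩
  · filter_upwards [ae_restrict_mem measurableSet_Ioi] with v hv
    rw [norm_of_nonneg (phiKernel_nonneg hx hv.le)]
    exact phiKernel_le_exp_neg hx hz hv.le

end Kernel

section Bounds

variable {n : ℕ} {x z : ℝ}

lemma Phi_antitoneOn (hx : 0 ≤ x) : AntitoneOn (Phi n x) (Ici 0) := by
  intro z hz z' hz' h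
  simp only [Phi_eq_integral_phiKernel]
  exact setIntegral_mono_on (integrableOn_phiKernel hx hz') (integrableOn_phiKernel hx hz)
    measurableSet_Ioi fun v hv => phiKernel_antitone hx (le_of_lt hv) h

lemma aestronglyMeasurable_Phi (hx : 0 ≤ x) :
    AEStronglyMeasurable (Phi n x) (volume.restrict (Ioi 0)) :=
  (aemeasurable_restrict_of_antitoneOn measurableSet_Ioi
    ((Phi_antitoneOn hx).mono Ioi_subset_Ici_self)).aestronglyMeasurable

lemma Phi_zero_left (n : ℕ) (z : ℝ) : Phi n 0 z = exp (-z) := by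
  simp only [Phi_eq_integral_phiKernel, phiKernel, zero_mul, add_zero, one_pow, inv_one, mul_one,
    div_one, integral_mul_const, integral_exp_neg_Ioi_zero, one_mul]

lemma tendsto_Phi_nhdsGT_zero (hz : 0 ≤ z) :
    Tendsto (fun x => Phi n x z) (𝓝[>] 0) (𝓝 (exp (-z))) := by
  rw [← Phi_zero_left n z]
  simp only [Phi_eq_integral_phiKernel]
  refine continuousWithinAt_of_dominated (bound := fun v => exp (-v)) ?_ ?_
    (integrableOn_exp_neg_Ioi 0) ?_
  · filter_upwards [self_mem_nhdsWithin] with x hx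
    exact (integrableOn_phiKernel (le_of_lt hx) hz).aestronglyMeasurable
  · filter_upwards [self_mem_nhdsWithin] with x hx
    filter_upwards [ae_restrict_mem measurableSet_Ioi] with v hv
    rw [norm_of_nonneg (phiKernel_nonneg (le_of_lt hx) hv.le)]
    exact phiKernel_le_exp_neg (le_of_lt hx) hz hv.le
  · exact ae_of_all _ fun v => continuousAt_phiKernel_zero.continuousWithinAt

lemma le_Phi (hx : 0 ≤ x) (hz : 0 ≤ z) {a : ℝ} (ha : 0 ≤ a) :
    exp (-(a + 1)) * ((1 + x * (a + 1)) ^ n)⁻¹ * exp (-z / (1 + x * a)) ≤ Phi n x z := by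
  set c := exp (-(a + 1)) * ((1 + x * (a + 1)) ^ n)⁻¹ * exp (-z / (1 + x * a))
  have hsub : Ioc a (a + 1) ⊆ Ioi 0 := fun v hv => ha.trans_lt hv.1
  calc c = ∫ _ in Ioc a (a + 1), c := by simp
    _ ≤ ∫ v in Ioc a (a + 1), phiKernel n x z v :=
      setIntegral_mono_on (integrableOn_const (by simp) (by simp))
        ((integrableOn_phiKernel hx hz).mono_set hsub) measurableSet_Ioc
        fun v hv => le_phiKernel hx hz ha hv
    _ ≤ Phi n x z := by
      rw [Phi_eq_integral_phiKernel]
      exact setIntegral_mono_set (integrableOn_phiKernel hx hz)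
        (ae_restrict_of_forall_mem measurableSet_Ioi fun v hv => phiKernel_nonneg hx (le_of_lt hv))
        hsub.eventuallyLE

lemma Phi_pos (hx : 0 ≤ x) (hz : 0 ≤ z) : 0 < Phi n x z :=
  lt_of_lt_of_le (by positivity) (le_Phi (n := n) hx hz le_rfl)

lemma Phi_le_exp_add_exp (hx : 0 ≤ x) (hz : 0 ≤ z) {a : ℝ} (ha : 0 ≤ a) :
    Phi n x z ≤ exp (-(z / (1 + x * a))) + exp (-a) := by
  have hint := integrableOn_phiKernel (n := n) hx hz
  rw [Phi_eq_integral_phiKernel, ← Ioc_union_Ioi_eq_Ioi ha,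
    setIntegral_union (Ioc_disjoint_Ioi le_rfl) measurableSet_Ioi
      (hint.mono_set Ioc_subset_Ioi_self) (hint.mono_set (Ioi_subset_Ioi ha))]
  refine add_le_add ?_ ?_
  · calc ∫ v in Ioc 0 a, phiKernel n x z v
        ≤ ∫ v in Ioc 0 a, exp (-(z / (1 + x * a))) * exp (-v) :=
          setIntegral_mono_on (hint.mono_set Ioc_subset_Ioi_self)
            (((integrableOn_exp_neg_Ioi 0).mono_set Ioc_subset_Ioi_self).const_mul _)
            measurableSet_Ioc fun v hv => phiKernel_le_of_le hx hz hv.1.le hv.2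
      _ ≤ ∫ v in Ioi 0, exp (-(z / (1 + x * a))) * exp (-v) :=
          setIntegral_mono_set ((integrableOn_exp_neg_Ioi 0).const_mul _)
            (ae_of_all _ fun v => by positivity) Ioc_subset_Ioi_self.eventuallyLE
      _ = exp (-(z / (1 + x * a))) := by
          rw [integral_const_mul, integral_exp_neg_Ioi_zero, mul_one]
  · calc ∫ v in Ioi a, phiKernel n x z v ≤ ∫ v in Ioi a, exp (-v) :=
          setIntegral_mono_on (hint.mono_set (Ioi_subset_Ioi ha)) (integrableOn_exp_neg_Ioi a)
            measurableSet_Ioi fun v hv => phiKernel_le_exp_neg hx hz (ha.trans hv.le)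
      _ = exp (-a) := integral_exp_neg_Ioi a

end Bounds

section Comparison

variable {n : ℕ} {q : ℝ}

lemma exp_neg_mul_le_Phi_sq (hq : 0 < q) {s : ℝ} (hs : 0 ≤ s) :
    exp (-1) * ((1 + q) ^ n)⁻¹ * exp (-((n + 1 + q⁻¹) * s)) ≤ Phi n q (s ^ 2) := by
  refine le_trans ?_ (le_Phi hq.le (sq_nonneg s) hs)
  have hlin : 1 + q * (s + 1) ≤ (1 + q) * exp s := by nlinarith [add_one_le_exp s, exp_pos s]
  have hpow : ((1 + q) ^ n)⁻¹ * exp (-(n * s)) ≤ ((1 + q * (s + 1)) ^ n)⁻¹ := by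
    rw [exp_neg, exp_nat_mul, ← mul_inv, ← mul_pow]
    gcongr
  have hexp : exp (-(s / q)) ≤ exp (-s ^ 2 / (1 + q * s)) := by
    rw [exp_le_exp, neg_div, neg_le_neg_iff, div_le_div_iff₀ (by positivity) hq]
    nlinarith
  have hsplit : -1 + -((n + 1 + q⁻¹) * s) = -(s + 1) + -(n * s) + -(s / q) := by ring
  calc exp (-1) * ((1 + q) ^ n)⁻¹ * exp (-((n + 1 + q⁻¹) * s))
      = exp (-(s + 1)) * (((1 + q) ^ n)⁻¹ * exp (-(n * s))) * exp (-(s / q)) := by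
        rw [mul_right_comm, ← exp_add, hsplit, exp_add, exp_add]; ring
    _ ≤ exp (-(s + 1)) * ((1 + q * (s + 1)) ^ n)⁻¹ * exp (-s ^ 2 / (1 + q * s)) := by gcongr

lemma Phi_sq_le_mul_exp_neg {p : ℝ} (hp : 0 ≤ p) {β s : ℝ} (hβ : 0 < β) (hpβ : p * β ^ 2 ≤ 1 / 2)
    (hs : 0 ≤ s) : Phi n p (s ^ 2) ≤ (exp (2 * β ^ 2) + 1) * exp (-(β * s)) := by
  refine (Phi_le_exp_add_exp hp (sq_nonneg s) (by positivity : 0 ≤ β * s)).trans ?_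
  have hkey : β * s - 2 * β ^ 2 ≤ s ^ 2 / (1 + p * (β * s)) := by
    rw [le_div_iff₀ (by positivity)]
    rcases le_total s (2 * β) with h | h
    · nlinarith [mul_nonneg hp (mul_nonneg hβ.le hs)]
    · nlinarith [mul_nonneg hp (mul_nonneg hβ.le hs)]
  have h1 : exp (-(s ^ 2 / (1 + p * (β * s)))) ≤ exp (2 * β ^ 2) * exp (-(β * s)) := by
    rw [← exp_add]; exact exp_le_exp.2 (by linarith)
  linarith

lemma exists_Phi_le_mul_Phi (hq : 0 < q) :
    ∃ M, ∀ᶠ p in 𝓝[>] 0, ∀ z, 0 ≤ z → Phi n p z ≤ M * Phi n q z := by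
  set β : ℝ := n + 1 + q⁻¹
  set c := exp (-1) * ((1 + q) ^ n)⁻¹
  have hβ : 0 < β := by positivity
  have hc : 0 < c := by positivity
  refine ⟨(exp (2 * β ^ 2) + 1) / c, ?_⟩
  filter_upwards [Ioo_mem_nhdsGT (by positivity : (0:ℝ) < 1 / (2 * β ^ 2))]
    with p ⟨hp, hpβ⟩ z hz
  rw [lt_div_iff₀ (by positivity)] at hpβ
  obtain ⟨s, hs, rfl⟩ : ∃ s, 0 ≤ s ∧ s ^ 2 = z := ⟨√z, sqrt_nonneg z, sq_sqrt hz⟩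
  calc Phi n p (s ^ 2) ≤ (exp (2 * β ^ 2) + 1) * exp (-(β * s)) :=
        Phi_sq_le_mul_exp_neg hp.le hβ (by linarith) hs
    _ = (exp (2 * β ^ 2) + 1) / c * (c * exp (-(β * s))) := by field_simp
    _ ≤ (exp (2 * β ^ 2) + 1) / c * Phi n q (s ^ 2) := by
        gcongr
        exact exp_neg_mul_le_Phi_sq hq hs

end Comparison

lemma integral_pow_div_factorial_mul_exp_neg_mul (m : ℕ) {c : ℝ} (hc : 0 < c) :
    ∫ z in Ioi 0, z ^ m / m ! * exp (-(c * z)) = (c ^ (m + 1))⁻¹ := by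
  have h := integral_rpow_mul_exp_neg_mul_Ioi (a := m + 1) (by positivity) hc
  rw [add_sub_cancel_right, Gamma_nat_eq_factorial, ← Nat.cast_succ, rpow_natCast] at h
  simp_rw [rpow_natCast] at h
  simp_rw [div_mul_eq_mul_div, integral_div, h, one_div, inv_pow]
  field_simp

lemma integrableOn_pow_div_factorial_mul_exp_neg_mul (m : ℕ) {c : ℝ} (hc : 0 < c) :
    IntegrableOn (fun z => z ^ m / m ! * exp (-(c * z))) (Ioi 0) := by
  have h := integrableOn_rpow_mul_exp_neg_mul_rpow (p := 1) (s := m)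
    (neg_one_lt_zero.trans_le m.cast_nonneg) one_pos hc
  refine IntegrableOn.congr_fun (h.div_const (m ! : ℝ)) (fun z _ => ?_) measurableSet_Ioi
  simp only [rpow_natCast, rpow_one, neg_mul]
  ring

section Normalization

variable {m : ℕ} {x : ℝ}

lemma pow_div_factorial_mul_phiKernel (m : ℕ) (x z v : ℝ) :
    z ^ m / m ! * phiKernel (m + 1) x z v =
      exp (-v) * ((1 + x * v) ^ (m + 1))⁻¹ * (z ^ m / m ! * exp (-((1 + x * v)⁻¹ * z))) := by
  rw [phiKernel, inv_mul_eq_div, neg_div]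
  ring

lemma integral_pow_div_factorial_mul_phiKernel (hx : 0 ≤ x) {v : ℝ} (hv : 0 ≤ v) :
    ∫ z in Ioi 0, z ^ m / m ! * phiKernel (m + 1) x z v = exp (-v) := by
  have h0 : 0 < 1 + x * v := by positivity
  simp_rw [pow_div_factorial_mul_phiKernel]
  rw [integral_const_mul, integral_pow_div_factorial_mul_exp_neg_mul m (inv_pos.2 h0), inv_pow,
    inv_inv, inv_mul_cancel_right₀ (pow_ne_zero _ h0.ne')]

lemma integrable_pow_div_factorial_mul_phiKernel (hx : 0 ≤ x) :
    Integrable (fun zv : ℝ × ℝ => zv.1 ^ m / m ! * phiKernel (m + 1) x zv.1 zv.2)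
      ((volume.restrict (Ioi 0)).prod (volume.restrict (Ioi 0))) := by
  have hmeas : AEStronglyMeasurable
      (fun zv : ℝ × ℝ => zv.1 ^ m / m ! * phiKernel (m + 1) x zv.1 zv.2)
      ((volume.restrict (Ioi 0)).prod (volume.restrict (Ioi 0))) := by
    rw [Measure.prod_restrict]
    refine ContinuousOn.aestronglyMeasurable ?_ (measurableSet_Ioi.prod measurableSet_Ioi)
    exact (Continuous.continuousOn (by fun_prop)).mul
      ((continuousOn_phiKernel hx).mono (prod_mono (subset_univ _) Ioi_subset_Ici_self))
  rw [integrable_prod_iff' hmeas]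
  constructor
  · filter_upwards [ae_restrict_mem measurableSet_Ioi] with v hv
    have h0 : 0 < 1 + x * v := by have : 0 ≤ v := le_of_lt hv; positivity
    simp_rw [pow_div_factorial_mul_phiKernel]
    exact (integrableOn_pow_div_factorial_mul_exp_neg_mul m (inv_pos.2 h0)).const_mul _
  · refine (integrableOn_exp_neg_Ioi 0).congr ?_
    filter_upwards [ae_restrict_mem measurableSet_Ioi] with v hv
    rw [← integral_pow_div_factorial_mul_phiKernel hx (le_of_lt hv)]
    refine setIntegral_congr_fun measurableSet_Ioi fun z hz => ?_
    exact (norm_of_nonneg (mul_nonneg (by have : 0 ≤ z := le_of_lt hz; positivity)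
      (phiKernel_nonneg hx (le_of_lt hv)))).symm

lemma integrableOn_pow_div_factorial_mul_Phi (hx : 0 ≤ x) :
    IntegrableOn (fun z => z ^ m / m ! * Phi (m + 1) x z) (Ioi 0) := by
  refine (integrable_pow_div_factorial_mul_phiKernel (m := m) hx).integral_prod_left.congr ?_
  filter_upwards with z
  rw [Phi_eq_integral_phiKernel, integral_const_mul]

lemma integral_pow_div_factorial_mul_Phi (hx : 0 ≤ x) :
    ∫ z in Ioi 0, z ^ m / m ! * Phi (m + 1) x z = 1 :=
  calc ∫ z in Ioi 0, z ^ m / m ! * Phi (m + 1) x z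
      = ∫ z in Ioi 0, ∫ v in Ioi 0, z ^ m / m ! * phiKernel (m + 1) x z v := by
        simp_rw [Phi_eq_integral_phiKernel, integral_const_mul]
    _ = ∫ v in Ioi 0, ∫ z in Ioi 0, z ^ m / m ! * phiKernel (m + 1) x z v :=
        integral_integral_swap (integrable_pow_div_factorial_mul_phiKernel hx)
    _ = ∫ v in Ioi 0, exp (-v) := setIntegral_congr_fun measurableSet_Ioi fun v hv =>
        integral_pow_div_factorial_mul_phiKernel hx (le_of_lt hv)
    _ = 1 := integral_exp_neg_Ioi_zero

end Normalization

/-- `Ψ(p, q, z) - 1` in the paper's notation. -/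
noncomputable def psiDev (n : ℕ) (q p z : ℝ) : ℝ :=
  p / (q - p) * (1 - Phi n p z / Phi n q z)

section PsiDev

variable {n : ℕ} {q p : ℝ}

lemma aestronglyMeasurable_psiDev (hq : 0 ≤ q) (hp : 0 ≤ p) :
    AEStronglyMeasurable (psiDev n q p) (volume.restrict (Ioi 0)) :=
  (aemeasurable_const.mul (aemeasurable_const.sub ((aestronglyMeasurable_Phi hp).aemeasurable.div
    (aestronglyMeasurable_Phi hq).aemeasurable))).aestronglyMeasurable

lemma psiDev_div (hp : p ≠ 0) (z : ℝ) :
    psiDev n q p z / p = (1 - Phi n p z / Phi n q z) / (q - p) := by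
  rw [psiDev, mul_comm, mul_div_assoc, div_div_cancel_left' hp, ← div_eq_mul_inv]

lemma tendsto_psiDev_div (hq : 0 < q) {z : ℝ} (hz : 0 ≤ z) :
    Tendsto (fun p => psiDev n q p z / p) (𝓝[>] 0) (𝓝 ((1 - exp (-z) / Phi n q z) / q)) := by
  have hden : Tendsto (fun p : ℝ => q - p) (𝓝[>] 0) (𝓝 (q - 0)) :=
    tendsto_const_nhds.sub (tendsto_id.mono_left nhdsWithin_le_nhds)
  rw [sub_zero] at hden
  have hnum := ((tendsto_Phi_nhdsGT_zero (n := n) hz).div_const (Phi n q z)).const_sub 1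
  refine (hnum.div hden hq.ne').congr' ?_
  filter_upwards [self_mem_nhdsWithin] with p hp
  exact (psiDev_div (ne_of_gt hp) z).symm

lemma exists_abs_psiDev_div_le (hq : 0 < q) :
    ∃ K, ∀ᶠ p in 𝓝[>] 0, ∀ z, 0 ≤ z → |psiDev n q p z / p| ≤ K := by
  obtain ⟨M, hM⟩ := exists_Phi_le_mul_Phi (n := n) hq
  refine ⟨2 * (1 + M) / q, ?_⟩
  filter_upwards [hM, Ioo_mem_nhdsGT (half_pos hq)] with p hpM ⟨hp, hpq⟩ z hz
  have hΦq := Phi_pos (n := n) hq.le hz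
  have hr0 : 0 ≤ Phi n p z / Phi n q z := div_nonneg (Phi_pos hp.le hz).le hΦq.le
  have hrM : Phi n p z / Phi n q z ≤ M := (div_le_iff₀ hΦq).2 (hpM z hz)
  have habs : |1 - Phi n p z / Phi n q z| ≤ 1 + M := abs_le.2 ⟨by linarith, by linarith⟩
  rw [psiDev_div hp.ne', abs_div, abs_of_pos (by linarith : 0 < q - p),
    div_le_div_iff₀ (by linarith) hq]
  nlinarith [abs_nonneg (1 - Phi n p z / Phi n q z)]

lemma integral_pow_div_factorial_mul_Phi_mul_psiDev {m : ℕ} (hq : 0 ≤ q) (hp : 0 ≤ p) :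
    ∫ z in Ioi 0, z ^ m / m ! * Phi (m + 1) q z * psiDev (m + 1) q p z = 0 := by
  have heq : ∀ z ∈ Ioi (0 : ℝ), z ^ m / m ! * Phi (m + 1) q z * psiDev (m + 1) q p z =
      p / (q - p) * (z ^ m / m ! * Phi (m + 1) q z - z ^ m / m ! * Phi (m + 1) p z) := by
    intro z hz
    have := (Phi_pos (n := m + 1) hq (le_of_lt hz)).ne'
    rw [psiDev]
    field_simp
  rw [setIntegral_congr_fun measurableSet_Ioi heq, integral_const_mul,
    integral_sub (integrableOn_pow_div_factorial_mul_Phi hq)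
      (integrableOn_pow_div_factorial_mul_Phi hp),
    integral_pow_div_factorial_mul_Phi hq, integral_pow_div_factorial_mul_Phi hp, sub_self,
    mul_zero]

end PsiDev

lemma integrableOn_pow_div_factorial_mul_exp_neg_two_mul_div_Phi {m : ℕ} {q : ℝ} (hq : 0 < q) :
    IntegrableOn (fun z => z ^ m / m ! * exp (-(2 * z)) / Phi (m + 1) q z) (Ioi 0) := by
  have hexp : IntegrableOn (fun z => z ^ m / m ! * exp (-z)) (Ioi 0) := by
    simpa using integrableOn_pow_div_factorial_mul_exp_neg_mul m one_pos
  refine (hexp.mul_const (exp 1 * (1 + q) ^ (m + 1))).mono' ?_ ?_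
  · exact ((by fun_prop : Measurable fun z : ℝ => z ^ m / m ! * exp (-(2 * z))).aemeasurable.div
      (aestronglyMeasurable_Phi hq.le).aemeasurable).aestronglyMeasurable
  · filter_upwards [ae_restrict_mem measurableSet_Ioi] with z hz
    have hz0 : 0 ≤ z := le_of_lt hz
    have hlow := le_Phi (n := m + 1) hq.le hz0 le_rfl
    simp only [zero_add, mul_one, mul_zero, add_zero, div_one] at hlow
    rw [norm_of_nonneg (by have := Phi_pos (n := m + 1) hq.le hz0; positivity)]
    calc z ^ m / m ! * exp (-(2 * z)) / Phi (m + 1) q z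
        ≤ z ^ m / m ! * exp (-(2 * z)) / (exp (-1) * ((1 + q) ^ (m + 1))⁻¹ * exp (-z)) := by
          gcongr
      _ = z ^ m / m ! * exp (-z) * (exp 1 * (1 + q) ^ (m + 1)) := by
          rw [exp_neg 1, show exp (-(2 * z)) = exp (-z) * exp (-z) by rw [← exp_add]; ring_nf]
          field_simp

lemma integral_pow_div_factorial_mul_Phi_mul_sq {m : ℕ} {q : ℝ} (hq : 0 < q) :
    ∫ z in Ioi 0, z ^ m / m ! * Phi (m + 1) q z * ((1 - exp (-z) / Phi (m + 1) q z) / q) ^ 2 =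
      (-1 + ∫ z in Ioi 0, z ^ m / m ! * exp (-(2 * z)) / Phi (m + 1) q z) / q ^ 2 := by
  have hexp : IntegrableOn (fun z => z ^ m / m ! * exp (-z)) (Ioi 0) := by
    simpa using integrableOn_pow_div_factorial_mul_exp_neg_mul m one_pos
  have hexp_val : ∫ z in Ioi 0, z ^ m / m ! * exp (-z) = 1 := by
    simpa using integral_pow_div_factorial_mul_exp_neg_mul m one_pos
  have hchi := integrableOn_pow_div_factorial_mul_exp_neg_two_mul_div_Phi (m := m) hq
  have hpt : ∀ z ∈ Ioi (0 : ℝ),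
      z ^ m / m ! * Phi (m + 1) q z * ((1 - exp (-z) / Phi (m + 1) q z) / q) ^ 2 =
        (z ^ m / m ! * Phi (m + 1) q z - 2 * (z ^ m / m ! * exp (-z)) +
          z ^ m / m ! * exp (-(2 * z)) / Phi (m + 1) q z) / q ^ 2 := by
    intro z hz
    have := (Phi_pos (n := m + 1) hq.le (le_of_lt hz)).ne'
    rw [show exp (-(2 * z)) = exp (-z) ^ 2 by rw [← exp_nat_mul]; ring_nf]
    field_simp
    ring
  have hdiff : IntegrableOn
      (fun z => z ^ m / m ! * Phi (m + 1) q z - 2 * (z ^ m / m ! * exp (-z))) (Ioi 0) :=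
    (integrableOn_pow_div_factorial_mul_Phi hq.le).sub (hexp.const_mul 2)
  rw [setIntegral_congr_fun measurableSet_Ioi hpt, integral_div, integral_add hdiff hchi,
    integral_sub (integrableOn_pow_div_factorial_mul_Phi hq.le) (hexp.const_mul 2),
    integral_const_mul, integral_pow_div_factorial_mul_Phi hq.le, hexp_val]
  ring

theorem stmt_11 (n : ℕ) (hn : 1 ≤ n) (q : ℝ) (hq : 0 < q)
    (D : ℝ → ℝ)
    (hD : ∀ p : ℝ, 0 < p → p < q →
      D p = -∫ z in Set.Ioi (0 : ℝ),
        z ^ (n - 1) / (Nat.factorial (n - 1) : ℝ) * Phi n q z *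
          Real.log (1 + p / (q - p) * (1 - Phi n p z / Phi n q z)))
    (ζ : ℝ)
    (hζ : ζ = -1 + ∫ z in Set.Ioi (0 : ℝ),
      z ^ (n - 1) / (Nat.factorial (n - 1) : ℝ) * Real.exp (-(2 * z)) / Phi n q z) :
    Tendsto (fun p : ℝ => D p / p ^ 2) (nhdsWithin 0 (Set.Ioo 0 q))
      (nhds (ζ / (2 * q ^ 2))) := by
  obtain ⟨m, rfl⟩ : ∃ m, n = m + 1 := ⟨n - 1, by omega⟩
  simp only [Nat.add_sub_cancel] at hD hζ
  obtain ⟨K, hK⟩ := exists_abs_psiDev_div_le (n := m + 1) hq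
  have hlim := tendsto_integral_mul_log_one_add_div_sq (l := 𝓝[>] 0) (T := psiDev (m + 1) q)
    (nhdsWithin_mono 0 fun p (hp : 0 < p) => hp.ne')
    (integrableOn_pow_div_factorial_mul_Phi (m := m) hq.le)
    (eventually_mem_nhdsWithin.mono fun p hp => aestronglyMeasurable_psiDev hq.le (le_of_lt hp))
    (hK.mono fun p hp => ae_restrict_of_forall_mem measurableSet_Ioi fun z hz => hp z (le_of_lt hz))
    (ae_restrict_of_forall_mem measurableSet_Ioi fun z hz => tendsto_psiDev_div hq (le_of_lt hz))
    (eventually_mem_nhdsWithin.mono fun p hp =>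
      integral_pow_div_factorial_mul_Phi_mul_psiDev hq.le (le_of_lt hp))
  rw [integral_pow_div_factorial_mul_Phi_mul_sq hq, ← hζ] at hlim
  rw [show ζ / (2 * q ^ 2) = -(-(ζ / q ^ 2) / 2) by ring]
  refine (hlim.neg.mono_left (nhdsWithin_mono 0 Ioo_subset_Ioi_self)).congr' ?_
  filter_upwards [self_mem_nhdsWithin] with p hp
  rw [hD p hp.1 hp.2, neg_div]
  rfl
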